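/- Let k ≥ 2, D ≥ 1 be integers and let γ ∈ (0, π/2), β ∈ (0, π/2) be a critical point of f(β,γ) = -(1/4)·sin(γ)·i·((cos(2β) + i·sin(2β)·cos^D(γ))^k - (cos(2β) - i·sin(2β)·cos^D(γ))^k) with respect to both β and γ. Then sin(2β) = cos(γ)/(sin(γ)·√(kD)), i.e., q = (c/s)·√(1/(kD)). -/

import Mathlib

/-!
With `z = cos 2β + i sin 2β cos^D γ` the objective is `(sin γ / 2) Im (z^k)`. Write
`z^(k-1) = a + b i`. Stationarity in `β` gives `a cos 2β cos^D γ = b sin 2β`, and stationarity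
in `γ` gives `cos γ (a sin 2β cos^D γ + b cos 2β) = k D sin²γ sin 2β cos^(D-1) γ a`.
Multiplying the second by `sin 2β` and eliminating `b` with the first leaves
`cos²γ = k D sin²γ sin²2β` after cancelling `a`, which is nonzero because `z ≠ 0`.
All quantities are positive on the given intervals, so the square root can be taken.
-/

open Real

noncomputable def qaoaExpr (k D : ℕ) (β γ : ℝ) : ℂ :=
  -(1 / 4 : ℂ) * (Real.sin γ : ℂ) * Complex.I *
    (((Real.cos (2 * β) : ℂ) + Complex.I * (Real.sin (2 * β) : ℂ) * (Real.cos γ : ℂ) ^ D) ^ k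
      - ((Real.cos (2 * β) : ℂ) - Complex.I * (Real.sin (2 * β) : ℂ) * (Real.cos γ : ℂ) ^ D) ^ k)

open Complex (I conj_ofReal conj_I)
open ComplexConjugate

noncomputable def qaoaPoint (D : ℕ) (β γ : ℝ) : ℂ :=
  (cos (2 * β) : ℂ) + (sin (2 * β) * cos γ ^ D : ℝ) * I

@[simp] theorem qaoaPoint_re (D : ℕ) (β γ : ℝ) : (qaoaPoint D β γ).re = cos (2 * β) := by
  simp only [qaoaPoint, Complex.add_re, Complex.ofReal_re, Complex.ofReal_im, Complex.mul_re,
    Complex.I_re, Complex.I_im]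
  ring

@[simp] theorem qaoaPoint_im (D : ℕ) (β γ : ℝ) :
    (qaoaPoint D β γ).im = sin (2 * β) * cos γ ^ D := by
  simp only [qaoaPoint, Complex.add_im, Complex.ofReal_re, Complex.ofReal_im, Complex.mul_im,
    Complex.I_re, Complex.I_im]
  ring

theorem qaoaPoint_ne_zero {D : ℕ} {β γ : ℝ} (hq : sin (2 * β) ≠ 0) (hm : cos γ ^ D ≠ 0) :
    qaoaPoint D β γ ≠ 0 := by
  intro h
  have him := congrArg Complex.im h
  rw [qaoaPoint_im, Complex.zero_im] at him
  exact mul_ne_zero hq hm him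

theorem conj_qaoaPoint (D : ℕ) (β γ : ℝ) :
    conj (qaoaPoint D β γ) = (cos (2 * β) : ℂ) - I * (sin (2 * β) : ℂ) * (cos γ : ℂ) ^ D := by
  simp only [qaoaPoint, map_add, map_mul, conj_ofReal, conj_I]
  push_cast
  ring

theorem qaoaExpr_eq (k D : ℕ) (β γ : ℝ) :
    qaoaExpr k D β γ = (sin γ / 2 * (qaoaPoint D β γ ^ k).im : ℝ) := by
  have hz : (cos (2 * β) : ℂ) + I * (sin (2 * β) : ℂ) * (cos γ : ℂ) ^ D = qaoaPoint D β γ := by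
    simp only [qaoaPoint]
    push_cast
    ring
  rw [qaoaExpr, ← conj_qaoaPoint, hz, ← map_pow, Complex.sub_conj]
  simp only [Complex.ofReal_mul, Complex.ofReal_div, Complex.ofReal_ofNat]
  linear_combination (-(1 / 2) * (sin γ : ℂ) * ((qaoaPoint D β γ ^ k).im : ℂ)) * Complex.I_sq

theorem HasDerivAt.im_pow {z : ℝ → ℂ} {z' : ℂ} {t : ℝ} (hz : HasDerivAt z z' t) (k : ℕ) :
    HasDerivAt (fun t => (z t ^ k).im) (k * (z t ^ (k - 1) * z').im) t := by
  have := Complex.imCLM.hasFDerivAt.comp_hasDerivAt t ((hasDerivAt_pow k (z t)).comp t hz)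
  simpa [Function.comp_def, mul_assoc] using this

theorem hasDerivAt_qaoaPoint_left (D : ℕ) (β γ : ℝ) :
    HasDerivAt (fun b => qaoaPoint D b γ)
      ((-2 * sin (2 * β) : ℝ) + (2 * cos (2 * β) * cos γ ^ D : ℝ) * I) β := by
  have h2 : HasDerivAt (fun b : ℝ => 2 * b) 2 β := by
    simpa using (hasDerivAt_id β).const_mul 2
  have hcos := (Real.hasDerivAt_cos (2 * β)).comp β h2
  have hsin := ((Real.hasDerivAt_sin (2 * β)).comp β h2).mul_const (cos γ ^ D)
  refine (hcos.ofReal_comp.add (hsin.ofReal_comp.mul_const I)).congr_deriv ?_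
  push_cast
  ring

theorem hasDerivAt_qaoaPoint_right (D : ℕ) (β γ : ℝ) :
    HasDerivAt (fun g => qaoaPoint D β g)
      ((-(sin (2 * β) * (D * cos γ ^ (D - 1) * sin γ)) : ℝ) * I) γ := by
  have hpow := (((Real.hasDerivAt_cos γ).pow D).const_mul (sin (2 * β))).ofReal_comp.mul_const I
  refine (hpow.const_add (cos (2 * β) : ℂ)).congr_deriv ?_
  push_cast
  ring

theorem hasDerivAt_qaoaExpr_left (k D : ℕ) (β γ : ℝ) :
    HasDerivAt (fun b => qaoaExpr k D b γ)
      (sin γ * k * ((qaoaPoint D β γ ^ (k - 1)).re * cos (2 * β) * cos γ ^ D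
        - (qaoaPoint D β γ ^ (k - 1)).im * sin (2 * β)) : ℝ) β := by
  simp only [qaoaExpr_eq]
  refine (((hasDerivAt_qaoaPoint_left D β γ).im_pow k).const_mul
    (sin γ / 2)).ofReal_comp.congr_deriv ?_
  simp only [Complex.mul_im, Complex.add_re, Complex.add_im, Complex.ofReal_re, Complex.ofReal_im,
    Complex.mul_re, Complex.I_re, Complex.I_im]
  congr 1
  ring

theorem hasDerivAt_qaoaExpr_right (k D : ℕ) (β γ : ℝ) :
    HasDerivAt (fun g => qaoaExpr k D β g)
      (cos γ / 2 * (qaoaPoint D β γ ^ k).im - k * D / 2 * sin γ ^ 2 * sin (2 * β)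
        * cos γ ^ (D - 1) * (qaoaPoint D β γ ^ (k - 1)).re : ℝ) γ := by
  simp only [qaoaExpr_eq]
  refine ((Real.hasDerivAt_sin γ).div_const 2 |>.mul
    ((hasDerivAt_qaoaPoint_right D β γ).im_pow k)).ofReal_comp.congr_deriv ?_
  simp only [Complex.mul_im, Complex.ofReal_re, Complex.ofReal_im, Complex.mul_re, Complex.I_re,
    Complex.I_im]
  congr 1
  ring

theorem re_mul_eq_of_deriv_left {k D : ℕ} {β γ : ℝ} (hs : sin γ ≠ 0) (hk : k ≠ 0)
    (h : deriv (fun b => qaoaExpr k D b γ) β = 0) :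
    (qaoaPoint D β γ ^ (k - 1)).re * cos (2 * β) * cos γ ^ D
      = (qaoaPoint D β γ ^ (k - 1)).im * sin (2 * β) := by
  rw [(hasDerivAt_qaoaExpr_left k D β γ).deriv, Complex.ofReal_eq_zero] at h
  exact sub_eq_zero.1 ((mul_eq_zero.1 h).resolve_left (mul_ne_zero hs (Nat.cast_ne_zero.2 hk)))

theorem cos_mul_eq_of_deriv_right {k D : ℕ} {β γ : ℝ} (hk : k ≠ 0)
    (h : deriv (fun g => qaoaExpr k D β g) γ = 0) :
    cos γ * ((qaoaPoint D β γ ^ (k - 1)).re * sin (2 * β) * cos γ ^ D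
        + (qaoaPoint D β γ ^ (k - 1)).im * cos (2 * β))
      = k * D * sin γ ^ 2 * sin (2 * β) * cos γ ^ (D - 1) * (qaoaPoint D β γ ^ (k - 1)).re := by
  rw [(hasDerivAt_qaoaExpr_right k D β γ).deriv, Complex.ofReal_eq_zero, ← pow_sub_one_mul hk,
    Complex.mul_im, qaoaPoint_re, qaoaPoint_im] at h
  linear_combination 2 * h

theorem sq_eq_of_critical_eqns {p q c s a b K m n : ℝ} (hpq : p ^ 2 + q ^ 2 = 1) (hm : m = n * c)
    (hn : n ≠ 0) (ha : a ≠ 0) (hβ : a * p * m = b * q)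
    (hγ : c * (a * q * m + b * p) = K * s ^ 2 * q * n * a) :
    c ^ 2 = K * s ^ 2 * q ^ 2 := by
  have h : (c ^ 2 - K * s ^ 2 * q ^ 2) * (n * a) = 0 := by
    linear_combination q * hγ + c * p * hβ - c * a * m * hpq - c * a * hm
  exact sub_eq_zero.1 ((mul_eq_zero.1 h).resolve_right (mul_ne_zero hn ha))

theorem re_ne_zero_of_re_mul_eq_im_mul {w : ℂ} {x y : ℝ} (hw : w ≠ 0) (hy : y ≠ 0)
    (h : w.re * x = w.im * y) : w.re ≠ 0 := by
  intro hre
  rw [hre, zero_mul, eq_comm, mul_eq_zero, or_iff_left hy] at h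
  exact hw (Complex.ext hre h)

theorem eq_div_mul_sqrt_of_sq_eq {q c s K : ℝ} (hq : 0 < q) (hc : 0 < c) (hs : 0 < s) (hK : 0 < K)
    (h : c ^ 2 = K * s ^ 2 * q ^ 2) : q = c / (s * √K) := by
  rw [eq_div_iff (by positivity)]
  refine (pow_left_inj₀ (by positivity) hc.le two_ne_zero).1 ?_
  rw [mul_pow, mul_pow, sq_sqrt hK.le, h]
  ring

theorem stmt_7 (k D : ℕ) (hk : 2 ≤ k) (hD : 1 ≤ D) (β γ : ℝ)
    (hβ : β ∈ Set.Ioo 0 (π / 2)) (hγ : γ ∈ Set.Ioo 0 (π / 2))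
    (hcritβ : deriv (fun b : ℝ => qaoaExpr k D b γ) β = 0)
    (hcritγ : deriv (fun g : ℝ => qaoaExpr k D β g) γ = 0) :
    Real.sin (2 * β) = Real.cos γ / (Real.sin γ * Real.sqrt (k * D)) := by
  obtain ⟨hβ0, hβ1⟩ := hβ
  obtain ⟨hγ0, hγ1⟩ := hγ
  have hq : 0 < sin (2 * β) := sin_pos_of_pos_of_lt_pi (by linarith) (by linarith)
  have hs : 0 < sin γ := sin_pos_of_pos_of_lt_pi hγ0 (by linarith [pi_pos])
  have hc : 0 < cos γ := cos_pos_of_mem_Ioo ⟨by linarith, hγ1⟩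
  have hk0 : k ≠ 0 := by omega
  have hstatβ := re_mul_eq_of_deriv_left hs.ne' hk0 hcritβ
  have hz := qaoaPoint_ne_zero hq.ne' (pow_ne_zero D hc.ne')
  have ha := re_ne_zero_of_re_mul_eq_im_mul (pow_ne_zero (k - 1) hz) hq.ne'
    (by rwa [mul_assoc] at hstatβ)
  have hsq := sq_eq_of_critical_eqns (cos_sq_add_sin_sq (2 * β))
    (pow_sub_one_mul (by omega) (cos γ)).symm (pow_ne_zero _ hc.ne') ha hstatβ
    (cos_mul_eq_of_deriv_right hk0 hcritγ)
  exact eq_div_mul_sqrt_of_sq_eq hq hc hs (by positivity) hsq
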